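/- Let θ and ρ be two distinct nontrivial equivalence relations on E_k and let γ = θ ∩ ρ. If Δ ⊊ γ ⊊ θ and γ ⊊ ρ, then Pol(θ) ∩ Pol(ρ) ⊊ Pol(θ) ∩ Pol(γ) ⊊ Pol(θ). -/

import Mathlib

/-- A finitary operation on `Fin k`: a pair of an arity `n` and a function
`(Fin n → Fin k) → Fin k`. -/
abbrev Ops (k : ℕ) := Σ n : ℕ, ((Fin n → Fin k) → Fin k)

/-- The set of finitary operations preserving a binary relation `θ` on `Fin k`. -/
def PolB {k : ℕ} (θ : Set (Fin k × Fin k)) : Set (Ops k) :=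
  {f | ∀ a b : Fin f.1 → Fin k, (∀ i, (a i, b i) ∈ θ) → (f.2 a, f.2 b) ∈ θ}

/-- The set of finitary operations preserving an `h`-ary relation `ρ` on `Fin k`. -/
def PolH {k h : ℕ} (ρ : Set (Fin h → Fin k)) : Set (Ops k) :=
  {f | ∀ M : Fin h → Fin f.1 → Fin k,
    (∀ i, (fun j => M j i) ∈ ρ) → (fun j => f.2 (M j)) ∈ ρ}

/-- A clone: contains all projections and is closed under composition. -/
def IsClone {k : ℕ} (C : Set (Ops k)) : Prop :=
  (∀ (n : ℕ) (i : Fin n), (⟨n, fun x => x i⟩ : Ops k) ∈ C) ∧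
  (∀ (n m : ℕ) (f : (Fin n → Fin k) → Fin k) (g : Fin n → (Fin m → Fin k) → Fin k),
    (⟨n, f⟩ : Ops k) ∈ C → (∀ i, (⟨m, g i⟩ : Ops k) ∈ C) →
    (⟨m, fun x => f fun i => g i x⟩ : Ops k) ∈ C)

/-- `C` is maximal in `D`: `C ⊊ D` and no clone lies strictly between them. -/
def MaximalIn {k : ℕ} (C D : Set (Ops k)) : Prop :=
  C ⊂ D ∧ ∀ F : Set (Ops k), IsClone F → ¬(C ⊂ F ∧ F ⊂ D)

/-- `θ` is an equivalence relation (as a set of pairs). -/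
def IsEquivRel {A : Type*} (θ : Set (A × A)) : Prop :=
  (∀ a, (a, a) ∈ θ) ∧ (∀ a b, (a, b) ∈ θ → (b, a) ∈ θ) ∧
    (∀ a b c, (a, b) ∈ θ → (b, c) ∈ θ → (a, c) ∈ θ)

/-- The diagonal relation `Δ` on `Fin k`. -/
def diag (k : ℕ) : Set (Fin k × Fin k) := {p | p.1 = p.2}

/-- A nontrivial equivalence relation: `Δ ⊊ θ ⊊ (Fin k)²`. -/
def NontrivEquiv {k : ℕ} (θ : Set (Fin k × Fin k)) : Prop :=
  IsEquivRel θ ∧ diag k ⊂ θ ∧ θ ⊂ Set.univ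

/-- Relational composition `α ∘ β = {(a,c) : ∃ b, (a,b) ∈ α ∧ (b,c) ∈ β}`. -/
def relComp {k : ℕ} (α β : Set (Fin k × Fin k)) : Set (Fin k × Fin k) :=
  {p | ∃ b, (p.1, b) ∈ α ∧ (b, p.2) ∈ β}

/-- The set of equivalence classes of `θ`. -/
def classesOf {A : Type*} (θ : Set (A × A)) : Set (Set A) :=
  {S | ∃ a : A, S = {b | (a, b) ∈ θ}}

/-- Totally reflexive: every tuple with a repeated entry is in `ρ`. -/
def TotallyReflexive {k h : ℕ} (ρ : Set (Fin h → Fin k)) : Prop :=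
  ∀ v : Fin h → Fin k, (∃ i j : Fin h, i ≠ j ∧ v i = v j) → v ∈ ρ

/-- Totally symmetric: closed under all permutations of coordinates. -/
def TotallySymmetric {k h : ℕ} (ρ : Set (Fin h → Fin k)) : Prop :=
  ∀ (v : Fin h → Fin k) (σ : Equiv.Perm (Fin h)), v ∈ ρ → v ∘ ⇑σ ∈ ρ

/-- The center of an `h`-ary relation: elements `a` such that every tuple whose
first coordinate is `a` lies in `ρ`. -/
def center {k h : ℕ} (ρ : Set (Fin h → Fin k)) : Set (Fin k) :=
  {a | ∀ v : Fin h → Fin k, (∀ i : Fin h, (i : ℕ) = 0 → v i = a) → v ∈ ρ}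

/-- An `h`-ary central relation. -/
def IsCentralRel {k h : ℕ} (ρ : Set (Fin h → Fin k)) : Prop :=
  ρ ≠ Set.univ ∧ TotallyReflexive ρ ∧ TotallySymmetric ρ ∧ (center ρ).Nonempty

/-- `η = {(u₁,…,u_h) : (u₁,u₂) ∈ θ}` (0-indexed: first two coordinates θ-related). -/
def eta {k : ℕ} (h : ℕ) (θ : Set (Fin k × Fin k)) : Set (Fin h → Fin k) :=
  {v | ∀ i j : Fin h, (i : ℕ) = 0 → (j : ℕ) = 1 → (v i, v j) ∈ θ}

/-- `ρ_{l,θ}`: tuples whose coordinates from position `l` onwards can be moved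
inside their θ-classes so as to land in `ρ` (0-indexed coordinates). -/
def rhoTh {k h : ℕ} (l : ℕ) (θ : Set (Fin k × Fin k)) (ρ : Set (Fin h → Fin k)) :
    Set (Fin h → Fin k) :=
  {a | ∃ u : Fin h → Fin k, (∀ j : Fin h, l ≤ (j : ℕ) → (u j, a j) ∈ θ) ∧
    (fun j : Fin h => if (j : ℕ) < l then a j else u j) ∈ ρ}

/-- `ρ` is θ-closed: `ρ = ρ_{0,θ}`. -/
def ThetaClosed {k h : ℕ} (θ : Set (Fin k × Fin k)) (ρ : Set (Fin h → Fin k)) : Prop :=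
  ρ = rhoTh 0 θ ρ

/-- `γ_σ = {(a_{σ(1)},…,a_{σ(h)}) : a ∈ γ}`. -/
def permuted {k h : ℕ} (σ : Equiv.Perm (Fin h)) (γ : Set (Fin h → Fin k)) :
    Set (Fin h → Fin k) :=
  {w | w ∘ ⇑σ.symm ∈ γ}

/-- A transversal of order `l` for the θ-classes: a system of representatives
(pairwise θ-unrelated, meeting every class) such that every tuple whose
coordinates from position `l` onwards lie in `T` belongs to `ρ`. -/
def IsTransversal {k h : ℕ} (θ : Set (Fin k × Fin k)) (ρ : Set (Fin h → Fin k)) (l : ℕ)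
    (T : Set (Fin k)) : Prop :=
  (∀ u ∈ T, ∀ v ∈ T, u ≠ v → (u, v) ∉ θ) ∧
  (∀ a : Fin k, ∃ u ∈ T, (a, u) ∈ θ) ∧
  (∀ w : Fin h → Fin k, (∀ j : Fin h, l ≤ (j : ℕ) → w j ∈ T) → w ∈ ρ)

/-- `ρ` is weakly θ-closed of order `l` (`1 ≤ l ≤ h-1`). -/
def WeaklyThetaClosed {k h : ℕ} (θ : Set (Fin k × Fin k)) (ρ : Set (Fin h → Fin k))
    (l : ℕ) : Prop :=
  1 ≤ l ∧ l ≤ h - 1 ∧ (∃ T : Set (Fin k), IsTransversal θ ρ (l - 1) T) ∧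
  ρ = ⋂ σ : Equiv.Perm (Fin h), permuted σ (rhoTh l θ ρ)

/-- Type I: `η ⊆ ρ` and every θ-class contains a central element of `ρ`. -/
def TypeI {k h : ℕ} (θ : Set (Fin k × Fin k)) (ρ : Set (Fin h → Fin k)) : Prop :=
  eta h θ ⊆ ρ ∧ ∀ a : Fin k, ∃ c : Fin k, (a, c) ∈ θ ∧ c ∈ center ρ

/-- Type II: `ρ` is θ-closed. -/
def TypeII {k h : ℕ} (θ : Set (Fin k × Fin k)) (ρ : Set (Fin h → Fin k)) : Prop :=
  ThetaClosed θ ρ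

/-- Type III: `ρ` is weakly θ-closed of some order and `η ⊆ ρ`. -/
def TypeIII {k h : ℕ} (θ : Set (Fin k × Fin k)) (ρ : Set (Fin h → Fin k)) : Prop :=
  (∃ l : ℕ, WeaklyThetaClosed θ ρ l) ∧ eta h θ ⊆ ρ

/-- `τ` is a diagonal relation through `θ`. -/
def IsDiagonal {k h : ℕ} (θ : Set (Fin k × Fin k)) (τ : Set (Fin h → Fin k)) : Prop :=
  ∃ (ε₁ : Setoid (Fin h)) (ε₂ : Set (Fin h × Fin h)),
    (∀ p ∈ ε₂, (∀ j, ε₁.r p.1 j → p.1 ≤ j) ∧ (∀ j, ε₁.r p.2 j → p.2 ≤ j)) ∧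
    (∀ i : Fin h, (∀ j, ε₁.r i j → i ≤ j) → (i, i) ∈ ε₂) ∧
    (∀ i j, (i, j) ∈ ε₂ → (j, i) ∈ ε₂) ∧
    (∀ i j l, (i, j) ∈ ε₂ → (j, l) ∈ ε₂ → (i, l) ∈ ε₂) ∧
    τ = {a | (∀ i j, ε₁.r i j → a i = a j) ∧ (∀ i j, (i, j) ∈ ε₂ → (a i, a j) ∈ θ)}

/-- `ρ^l_{0,θ}`: `l`-tuples which can be moved inside their θ-classes so that
every `h`-tuple with all entries among the moved elements lies in `ρ`. -/
def rhoPow {k h : ℕ} (l : ℕ) (θ : Set (Fin k × Fin k)) (ρ : Set (Fin h → Fin k)) :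
    Set (Fin l → Fin k) :=
  {u | ∃ e : Fin l → Fin k, (∀ i, (e i, u i) ∈ θ) ∧
    ∀ w : Fin h → Fin k, (∀ j, ∃ i, w j = e i) → w ∈ ρ}

/-- An `h`-regular family of equivalence relations. -/
def IsHRegFamily {A : Type*} (h : ℕ) {m : ℕ} (T : Fin m → Set (A × A)) : Prop :=
  (∀ i, IsEquivRel (T i)) ∧
  (∀ i, (classesOf (T i)).ncard = h) ∧
  (∀ x : Fin m → A, (⋂ i, {b | (x i, b) ∈ T i}).Nonempty)

/-- The `h`-regular relation determined by the family `T`: tuples whose set of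
components meets at most `h-1` classes of each member of the family. -/
def hRegRel {A : Type*} (h : ℕ) {m : ℕ} (T : Fin m → Set (A × A)) : Set (Fin h → A) :=
  {a | ∀ i : Fin m, {S ∈ classesOf (T i) | ∃ j : Fin h, a j ∈ S}.ncard ≤ h - 1}

/-- `ρ` is an `h`-regular relation: determined by some `h`-regular family. -/
def IsHRegularRel {A : Type*} (h : ℕ) (ρ : Set (Fin h → A)) : Prop :=
  ∃ m : ℕ, 1 ≤ m ∧ ∃ T : Fin m → Set (A × A), IsHRegFamily h T ∧ ρ = hRegRel h T

/-! Each strict inclusion is witnessed by a unary operation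
`x ↦ if x ∈ S then b else a` with `(a, b) ∈ θ \ γ`. Its image lies in one θ-class, so it
preserves θ. For `Pol(θ) ∩ Pol(γ) ⊊ Pol(θ)` take `S = {d}` with `(c, d) ∈ γ \ Δ`: then
`(c, d) ↦ (a, b) ∉ γ`. For `Pol(θ) ∩ Pol(ρ) ⊊ Pol(θ) ∩ Pol(γ)` take `S` the γ-class of `d`
with `(c, d) ∈ ρ \ γ`: being constant on γ-classes the operation preserves γ, while
`(c, d) ↦ (a, b) ∉ ρ`. -/

lemma IsEquivRel.inter {A : Type*} {θ ρ : Set (A × A)} (hθ : IsEquivRel θ)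
    (hρ : IsEquivRel ρ) : IsEquivRel (θ ∩ ρ) :=
  ⟨fun a => ⟨hθ.1 a, hρ.1 a⟩, fun a b h => ⟨hθ.2.1 a b h.1, hρ.2.1 a b h.2⟩,
    fun a b c h h' => ⟨hθ.2.2 a b c h.1 h'.1, hρ.2.2 a b c h.2 h'.2⟩⟩

lemma PolB_inter_subset {k : ℕ} (θ ρ : Set (Fin k × Fin k)) :
    PolB θ ∩ PolB ρ ⊆ PolB (θ ∩ ρ) :=
  fun _ hf a b hab => ⟨hf.1 a b fun i => (hab i).1, hf.2 a b fun i => (hab i).2⟩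

def unaryOp {k : ℕ} (e : Fin k → Fin k) : Ops k := ⟨1, fun x => e (x 0)⟩

lemma unaryOp_mem_PolB_iff {k : ℕ} (e : Fin k → Fin k) (θ : Set (Fin k × Fin k)) :
    unaryOp e ∈ PolB θ ↔ ∀ x y, (x, y) ∈ θ → (e x, e y) ∈ θ :=
  ⟨fun he x y hxy => he (fun _ => x) (fun _ => y) fun _ => hxy,
    fun he _ _ hab => he _ _ (hab (0 : Fin 1))⟩

open Classical in
noncomputable def selector {A : Type*} (S : Set A) (a b : A) : A → A :=
  fun x => if x ∈ S then b else a

section Selector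

variable {A : Type*} {S : Set A} {a b : A}

lemma selector_of_mem {x : A} (hx : x ∈ S) : selector S a b x = b := if_pos hx

lemma selector_of_not_mem {x : A} (hx : x ∉ S) : selector S a b x = a := if_neg hx

lemma selector_mem_of_mem {θ : Set (A × A)} (hθ : IsEquivRel θ) (hab : (a, b) ∈ θ)
    (x y : A) :
    (selector S a b x, selector S a b y) ∈ θ := by
  by_cases hx : x ∈ S <;> by_cases hy : y ∈ S <;>
    simp only [selector_of_mem, selector_of_not_mem, hx, hy, not_false_eq_true]
  exacts [hθ.1 b, hθ.2.1 a b hab, hab, hθ.1 a]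

lemma selector_mem_of_saturated {σ : Set (A × A)} (hσ : ∀ x, (x, x) ∈ σ)
    (hS : ∀ x y, (x, y) ∈ σ → (x ∈ S ↔ y ∈ S)) {x y : A} (hxy : (x, y) ∈ σ) :
    (selector S a b x, selector S a b y) ∈ σ := by
  by_cases hx : x ∈ S
  · rw [selector_of_mem hx, selector_of_mem ((hS x y hxy).1 hx)]
    exact hσ b
  · rw [selector_of_not_mem hx, selector_of_not_mem (mt (hS x y hxy).2 hx)]
    exact hσ a

end Selector

lemma IsEquivRel.class_saturated {A : Type*} {σ : Set (A × A)} (hσ : IsEquivRel σ)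
    (d x y : A) (hxy : (x, y) ∈ σ) : x ∈ {z | (d, z) ∈ σ} ↔ y ∈ {z | (d, z) ∈ σ} :=
  ⟨fun hx => hσ.2.2 d x y hx hxy, fun hy => hσ.2.2 d y x hy (hσ.2.1 x y hxy)⟩

section Witnesses

variable {k : ℕ} {θ ρ : Set (Fin k × Fin k)}

lemma PolB_inter_ssubset_PolB (hθ : IsEquivRel θ) (h1 : diag k ⊂ θ ∩ ρ)
    (h2 : θ ∩ ρ ⊂ θ) :
    PolB θ ∩ PolB (θ ∩ ρ) ⊂ PolB θ := by
  obtain ⟨⟨a, b⟩, habθ, habγ⟩ := Set.exists_of_ssubset h2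
  obtain ⟨⟨c, d⟩, hcdγ, hcd⟩ := Set.exists_of_ssubset h1
  refine (Set.ssubset_iff_of_subset Set.inter_subset_left).2
    ⟨unaryOp (selector {d} a b), ?_, fun hf => habγ ?_⟩
  · exact (unaryOp_mem_PolB_iff _ _).2 fun x y _ => selector_mem_of_mem hθ habθ x y
  · have := (unaryOp_mem_PolB_iff _ _).1 hf.2 c d hcdγ
    rwa [selector_of_not_mem (Set.mem_singleton_iff.not.2 hcd),
      selector_of_mem (Set.mem_singleton d)] at this

lemma PolB_inter_ssubset_PolB_inter (hθ : IsEquivRel θ) (hρ : IsEquivRel ρ)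
    (h2 : θ ∩ ρ ⊂ θ) (h3 : θ ∩ ρ ⊂ ρ) :
    PolB θ ∩ PolB ρ ⊂ PolB θ ∩ PolB (θ ∩ ρ) := by
  obtain ⟨⟨a, b⟩, habθ, habγ⟩ := Set.exists_of_ssubset h2
  obtain ⟨⟨c, d⟩, hcdρ, hcdγ⟩ := Set.exists_of_ssubset h3
  have hγ := hθ.inter hρ
  set S := {z | (d, z) ∈ θ ∩ ρ}
  refine (Set.ssubset_iff_of_subset
    (Set.subset_inter Set.inter_subset_left (PolB_inter_subset θ ρ))).2
    ⟨unaryOp (selector S a b), ⟨?_, ?_⟩, fun hf => habγ ⟨habθ, ?_⟩⟩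
  · exact (unaryOp_mem_PolB_iff _ _).2 fun x y _ => selector_mem_of_mem hθ habθ x y
  · exact (unaryOp_mem_PolB_iff _ _).2 fun x y =>
      selector_mem_of_saturated hγ.1 (hγ.class_saturated d)
  · have hc : c ∉ S := fun hc => hcdγ ⟨hθ.2.1 d c hc.1, hcdρ⟩
    have := (unaryOp_mem_PolB_iff _ _).1 hf.2 c d hcdρ
    rwa [selector_of_not_mem hc, selector_of_mem (show d ∈ S from hγ.1 d)] at this

end Witnesses

theorem stmt5_general (k : ℕ) (θ ρ : Set (Fin k × Fin k))
    (hθ : NontrivEquiv θ) (hρ : NontrivEquiv ρ)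
    (h1 : diag k ⊂ θ ∩ ρ) (h2 : θ ∩ ρ ⊂ θ) (h3 : θ ∩ ρ ⊂ ρ) :
    PolB θ ∩ PolB ρ ⊂ PolB θ ∩ PolB (θ ∩ ρ) ∧
      PolB θ ∩ PolB (θ ∩ ρ) ⊂ PolB θ :=
  ⟨PolB_inter_ssubset_PolB_inter hθ.1 hρ.1 h2 h3, PolB_inter_ssubset_PolB hθ.1 h1 h2⟩

/-- For distinct nontrivial equivalence relations `θ`, `ρ` with
`Δ ⊊ γ ⊊ θ` and `γ ⊊ ρ` where `γ = θ ∩ ρ`, one has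
`Pol(θ) ∩ Pol(ρ) ⊊ Pol(θ) ∩ Pol(γ) ⊊ Pol(θ)`. -/
theorem stmt5 (k : ℕ) (θ ρ : Set (Fin k × Fin k))
    (hθ : NontrivEquiv θ) (hρ : NontrivEquiv ρ) (hne : θ ≠ ρ)
    (h1 : diag k ⊂ θ ∩ ρ) (h2 : θ ∩ ρ ⊂ θ) (h3 : θ ∩ ρ ⊂ ρ) :
    PolB θ ∩ PolB ρ ⊂ PolB θ ∩ PolB (θ ∩ ρ) ∧
      PolB θ ∩ PolB (θ ∩ ρ) ⊂ PolB θ :=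
  stmt5_general k θ ρ hθ hρ h1 h2 h3
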